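/- Define on the null-shell the weight ω := 1 − (p_{r*}/E)·(3 − 1/log(2+r)), where E = −p_t. Then: (i) along any radially reduced future-directed null geodesic, at every parameter s with r(s) ≥ 6M, one has E·ω'(s) ≤ −p_{r*}²/((2+r)·log²(2+r)) − ℓ²/(2r³); and (ii) if χ : ℝ → ℝ is a C¹ nondecreasing function with χ(s) = 0 for s ≤ 0 and χ(s) = 1 for s ≥ 1, and R ≥ 3M, then along any radially reduced future-directed null geodesic the function s ↦ χ(r(s) − R)·χ(−p_{r*}(s)) is nonincreasing, i.e. d/ds[χ(r−R)·χ(−p_{r*})] ≤ 0. -/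

import Mathlib

/-!
Since `r' = p_{r*}` and `p_{r*}' = (r - 3M) ℓ² / r⁴` along the geodesic,
`E ω' = -(3 - 1/log(2+r)) (r - 3M) ℓ² / r⁴ - p_{r*}² / ((2+r) log²(2+r))`.
For `r ≥ 6M` the angular force is at least `ℓ² / (2r³)`, and `log(2+r) ≥ log 2 > 1/2` makes
its factor at least `1`.

For the cutoff, `χ` and `χ'` are nonnegative. The factor `χ(r - R)` can only grow where
`p_{r*} > 0`, where `χ(-p_{r*}) = 0`; the factor `χ(-p_{r*})` only where `p_{r*}' < 0`, which
forces `r < 3M ≤ R`, where `χ(r - R) = 0`.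
-/

open Real

lemma one_le_three_sub_inv_log_two_add {x : ℝ} (hx : 0 ≤ x) : 1 ≤ 3 - 1 / log (2 + x) := by
  have hlog : 1 / 2 < log (2 + x) :=
    calc (1 : ℝ) / 2 < log 2 := by linarith [log_two_gt_d9]
      _ ≤ log (2 + x) := log_le_log two_pos (by linarith)
  have : 1 / log (2 + x) < 2 := by
    rw [div_lt_iff₀ (by linarith)]
    linarith
  linarith

lemma one_div_two_mul_pow_three_le {M r : ℝ} (hM : 0 < M) (hr : 6 * M ≤ r) :
    1 / (2 * r ^ 3) ≤ (r - 3 * M) / r ^ 4 := by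
  have hr0 : 0 < r := by linarith
  rw [div_le_div_iff₀ (by positivity) (by positivity)]
  nlinarith [pow_pos hr0 3]

lemma hasDerivWithinAt_weight {r p : ℝ → ℝ} {r' p' E : ℝ} {I : Set ℝ} {s : ℝ}
    (hr : HasDerivWithinAt r r' I s) (hp : HasDerivWithinAt p p' I s)
    (hlog : log (2 + r s) ≠ 0) :
    HasDerivWithinAt (fun u => 1 - p u / E * (3 - 1 / log (2 + r u)))
      (-(p' * (3 - 1 / log (2 + r s)) + p s * r' / ((2 + r s) * log (2 + r s) ^ 2)) / E) I s := by
  have hL : HasDerivWithinAt (fun u => log (2 + r u)) (r' / (2 + r s)) I s :=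
    (hr.const_add 2).log fun h => hlog (by rw [h, log_zero])
  have hinv := (hasDerivWithinAt_const s I (1 : ℝ)).fun_div hL hlog
  exact ((hp.div_const E).mul (hinv.const_sub 3)).const_sub 1 |>.congr_deriv (by field_simp; ring)

lemma Monotone.nonneg_of_eq_zero_of_nonpos {χ : ℝ → ℝ} (hmono : Monotone χ)
    (hχ0 : ∀ x, x ≤ 0 → χ x = 0) (x : ℝ) : 0 ≤ χ x :=
  (hχ0 _ (min_le_right x 0)).symm.le.trans (hmono (min_le_left x 0))

lemma Monotone.mul_nonpos_of_eq_zero_of_nonpos {χ : ℝ → ℝ} (hmono : Monotone χ)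
    (hχ0 : ∀ x, x ≤ 0 → χ x = 0) {x y : ℝ} (h : 0 < x → y ≤ 0) : χ x * y ≤ 0 := by
  rcases le_or_gt x 0 with hx | hx
  · rw [hχ0 x hx, zero_mul]
  · exact mul_nonpos_of_nonneg_of_nonpos (hmono.nonneg_of_eq_zero_of_nonpos hχ0 x) (h hx)

lemma exists_hasDerivWithinAt_cutoff_mul_cutoff_nonpos {χ : ℝ → ℝ} (hχ : Differentiable ℝ χ)
    (hmono : Monotone χ) (hχ0 : ∀ x, x ≤ 0 → χ x = 0) {a b : ℝ → ℝ} {a' b' : ℝ} {I : Set ℝ}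
    {s : ℝ} (ha : HasDerivWithinAt a a' I s) (hb : HasDerivWithinAt b b' I s)
    (hab : 0 < b s → a' ≤ 0) (hba : 0 < a s → b' ≤ 0) :
    ∃ d, HasDerivWithinAt (fun u => χ (a u) * χ (b u)) d I s ∧ d ≤ 0 := by
  have hda := (hχ (a s)).hasDerivAt.comp_hasDerivWithinAt s ha
  have hdb := (hχ (b s)).hasDerivAt.comp_hasDerivWithinAt s hb
  refine ⟨_, hda.mul hdb, ?_⟩
  have h₁ : χ (b s) * (deriv χ (a s) * a') ≤ 0 :=
    hmono.mul_nonpos_of_eq_zero_of_nonpos hχ0 fun hbs =>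
      mul_nonpos_of_nonneg_of_nonpos hmono.deriv_nonneg (hab hbs)
  have h₂ : χ (a s) * (deriv χ (b s) * b') ≤ 0 :=
    hmono.mul_nonpos_of_eq_zero_of_nonpos hχ0 fun has =>
      mul_nonpos_of_nonneg_of_nonpos hmono.deriv_nonneg (hba has)
  simp only [Function.comp_def]
  linarith

theorem schwarzschild_faraway_incoming_weights
    (M : ℝ) (hM : 0 < M)
    (I : Set ℝ)
    (r prs : ℝ → ℝ) (E ℓ : ℝ) (hE : 0 < E)
    (hdr : ∀ s ∈ I, HasDerivWithinAt r (prs s) I s)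
    (hdp : ∀ s ∈ I, HasDerivWithinAt prs ((r s - 3 * M) / (r s) ^ 4 * ℓ ^ 2) I s) :
    (∀ s ∈ I, 6 * M ≤ r s →
      ∃ d, HasDerivWithinAt
          (fun u => 1 - prs u / E * (3 - 1 / Real.log (2 + r u))) d I s ∧
        E * d ≤ -(prs s) ^ 2 / ((2 + r s) * (Real.log (2 + r s)) ^ 2)
            - ℓ ^ 2 / (2 * (r s) ^ 3)) ∧
    (∀ χ : ℝ → ℝ, ContDiff ℝ 1 χ → Monotone χ →
      (∀ x, x ≤ 0 → χ x = 0) → (∀ x, 1 ≤ x → χ x = 1) →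
      ∀ R : ℝ, 3 * M ≤ R → ∀ s ∈ I,
        ∃ d, HasDerivWithinAt (fun u => χ (r u - R) * χ (-prs u)) d I s ∧ d ≤ 0) := by
  refine ⟨fun s hs h6M => ?_, fun χ hχ hmono hχ0 _ R hR s hs => ?_⟩
  · have hr0 : 0 < r s := by linarith
    have hlog : 0 < log (2 + r s) := log_pos (by linarith)
    refine ⟨_, hasDerivWithinAt_weight (hdr s hs) (hdp s hs) hlog.ne', ?_⟩
    have hforce : ℓ ^ 2 / (2 * r s ^ 3)
        ≤ (r s - 3 * M) / r s ^ 4 * ℓ ^ 2 * (3 - 1 / log (2 + r s)) :=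
      calc ℓ ^ 2 / (2 * r s ^ 3) = 1 / (2 * r s ^ 3) * ℓ ^ 2 * 1 := by ring
        _ ≤ _ := by
          have : 0 ≤ r s - 3 * M := by linarith
          gcongr ?_ * _ * ?_
          · exact one_div_two_mul_pow_three_le hM h6M
          · exact one_le_three_sub_inv_log_two_add hr0.le
    rw [mul_div_cancel₀ _ hE.ne', ← sq, neg_div]
    linarith
  · refine exists_hasDerivWithinAt_cutoff_mul_cutoff_nonpos (hχ.differentiable one_ne_zero)
      hmono hχ0 ((hdr s hs).sub_const R) (hdp s hs).neg (fun h => by linarith) fun h => ?_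
    have : 0 ≤ r s - 3 * M := by linarith
    have : 0 ≤ (r s - 3 * M) / r s ^ 4 * ℓ ^ 2 := by positivity
    linarith
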